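/- Suppose 1 is not an eigenvalue of the integral operator 𝐑 of the payoff structure R on L²(ν) (in particular this holds under condition (R2)). If f and g are equilibria of two incomplete information games sharing the same state process θ and payoff structure R (but possibly different signal structures), then E[f(t)] = E[g(t)] for every t ∈ T. -/

import Mathlib

open MeasureTheory

/-- The mean `E[x]` of a square-integrable random variable. -/
noncomputable def meanL2 {Ω : Type*} [mΩ' : MeasurableSpace Ω] (P : Measure Ω)
    (x : Lp ℝ 2 P) : ℝ := ∫ ω, x ω ∂P

/-- The covariance `Cov[x, y] = E[xy] − E[x]·E[y]`. -/
noncomputable def covL2 {Ω : Type*} [mΩ' : MeasurableSpace Ω] (P : Measure Ω)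
    (x y : Lp ℝ 2 P) : ℝ := (inner ℝ x y : ℝ) - meanL2 P x * meanL2 P y

/-- Condition (Q1): the second-moment map `(s,t) ↦ E[h(s)·h(t)]` is jointly measurable with
respect to the completed product σ-algebra. -/
def SatisfiesQ1 {Ω : Type*} [mΩ' : MeasurableSpace Ω] {P : Measure Ω}
    {T : Type*} [MeasurableSpace T] (ν : Measure T) (h : T → Lp ℝ 2 P) : Prop :=
  NullMeasurable (fun p : T × T => (inner ℝ (h p.1) (h p.2) : ℝ)) (ν.prod ν)

/-- Condition (Q2): `t ↦ ‖h t‖` is `ν`-measurable (w.r.t. the completion) and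
`∫ ‖h t‖² dν < ∞`. -/
def SatisfiesQ2 {Ω : Type*} [mΩ' : MeasurableSpace Ω] {P : Measure Ω}
    {T : Type*} [MeasurableSpace T] (ν : Measure T) (h : T → Lp ℝ 2 P) : Prop :=
  NullMeasurable (fun t => ‖h t‖) ν ∧ ∫⁻ t, ENNReal.ofReal (‖h t‖ ^ 2) ∂ν < ⊤

/-- `f` is an equilibrium of the incomplete information game with state process `θ`, payoff
structure `R`, and signal structure `𝔛`:  each `f t` is `𝔛 t`-measurable (up to `P`-null
sets), `f` is regular (satisfies (Q1) and (Q2)), and for every `t` the process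
`t' ↦ R t t' • f t'` is Pettis integrable with Pettis integral `F t` satisfying the linear
best response `f t = E[F t | 𝔛 t] + E[θ t | 𝔛 t]` `P`-a.s. -/
def IsEquilibrium {Ω : Type*} [mΩ' : MeasurableSpace Ω] (P : Measure Ω)
    {T : Type*} [MeasurableSpace T] (ν : Measure T)
    (θ : T → Lp ℝ 2 P) (R : T → T → ℝ) (𝔛 : T → MeasurableSpace Ω)
    (f : T → Lp ℝ 2 P) : Prop :=
  (∀ t, ∃ g : Ω → ℝ, Measurable[𝔛 t] g ∧ (f t : Ω → ℝ) =ᵐ[P] g) ∧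
  SatisfiesQ1 ν f ∧ SatisfiesQ2 ν f ∧
  ∀ t, ∃ F : Lp ℝ 2 P,
    (∀ x : Lp ℝ 2 P, (inner ℝ x F : ℝ) = ∫ t', R t t' * (inner ℝ x (f t') : ℝ) ∂ν) ∧
    (f t : Ω → ℝ) =ᵐ[P]
      fun ω => (P[(F : Ω → ℝ)|𝔛 t]) ω + (P[(θ t : Ω → ℝ)|𝔛 t]) ω


set_option synthInstance.maxHeartbeats 1000000
set_option maxHeartbeats 1000000

section AuxHelpers

variable {Ω : Type*} [mΩ' : MeasurableSpace Ω] {P : Measure Ω}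
variable {T : Type*} [MeasurableSpace T] {ν : Measure T}

/-- If `h` satisfies (Q1), then for every `x` the map `t ↦ ⟨x, h t⟩` is a.e.-measurable. -/
lemma aux_aemeasurable_inner [SFinite ν]
    (h : T → Lp ℝ 2 P)
    (hQ1 : SatisfiesQ1 ν h)
    (x : Lp ℝ 2 P) :
    AEMeasurable (fun t => (inner ℝ x (h t) : ℝ)) ν := by
  have hae := hQ1.aemeasurable
  set K := hae.mk _ with hK
  have hKmeas : Measurable K := hae.measurable_mk
  have hsec : ∀ᵐ s ∂ν, AEMeasurable (fun t => (inner ℝ (h s) (h t) : ℝ)) ν := by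
    have := Measure.ae_ae_of_ae_prod hae.ae_eq_mk
    filter_upwards [this] with s hs
    exact (hKmeas.comp measurable_prodMk_left).aemeasurable.congr
      (hs.mono fun t ht => ht.symm)
  set S : Set T := {s | AEMeasurable (fun t => (inner ℝ (h s) (h t) : ℝ)) ν} with hS
  have hSco : ∀ᵐ s ∂ν, s ∈ S := hsec
  set H : Submodule ℝ (Lp ℝ 2 P) :=
    (Submodule.span ℝ (h '' S)).topologicalClosure with hH
  haveI : CompleteSpace H :=
    (Submodule.span ℝ (h '' S)).isClosed_topologicalClosure.completeSpace_coe
  have hspan : ∀ u ∈ Submodule.span ℝ (h '' S),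
      AEMeasurable (fun t => (inner ℝ u (h t) : ℝ)) ν := by
    intro u hu
    induction hu using Submodule.span_induction with
    | mem u hu =>
        obtain ⟨s, hs, rfl⟩ := hu
        exact hs
    | zero => simp only [inner_zero_left]; exact aemeasurable_const
    | add u v _ _ hu hv =>
        simp only [inner_add_left]; exact hu.add hv
    | smul a u _ hu =>
        simpa [real_inner_smul_left] using hu.const_mul a
  have hclos : ∀ u : Lp ℝ 2 P, u ∈ H →
      AEMeasurable (fun t => (inner ℝ u (h t) : ℝ)) ν := by
    intro u hu
    have hu' : u ∈ closure ((Submodule.span ℝ (h '' S) : Submodule ℝ (Lp ℝ 2 P)) :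
        Set (Lp ℝ 2 P)) := hu
    rw [mem_closure_iff_seq_limit] at hu'
    obtain ⟨v, hv, hvlim⟩ := hu'
    refine aemeasurable_of_tendsto_metrizable_ae Filter.atTop
      (fun n => hspan (v n) (hv n)) ?_
    refine Filter.Eventually.of_forall fun t => ?_
    have : Filter.Tendsto (fun w : Lp ℝ 2 P => (inner ℝ w (h t) : ℝ)) (nhds u)
        (nhds (inner ℝ u (h t) : ℝ)) :=
      (continuous_inner.comp (Continuous.prodMk continuous_id continuous_const)).continuousAt
    exact this.comp hvlim
  set y : Lp ℝ 2 P := (Submodule.orthogonalProjection H x : Lp ℝ 2 P) with hy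
  have hyH : y ∈ H := (Submodule.orthogonalProjection H x).2
  have hmem : ∀ᵐ t ∂ν, h t ∈ H := by
    filter_upwards [hSco] with t ht
    exact Submodule.le_topologicalClosure _ (Submodule.subset_span ⟨t, ht, rfl⟩)
  have hperp : x - y ∈ Hᗮ := Submodule.sub_starProjection_mem_orthogonal (K := H) x
  refine (hclos y hyH).congr ?_
  filter_upwards [hmem] with t ht
  have h0 : (inner ℝ (x - y) (h t) : ℝ) =
      0 := (Submodule.mem_orthogonal' H (x - y)).mp hperp (h t) ht
  have := inner_sub_left (𝕜 := ℝ) x y (h t)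
  rw [h0] at this
  linarith [this]

/-- The constant function `1` as an element of `L²(P)`. -/
noncomputable def oneL2 (P : Measure Ω) [IsFiniteMeasure P] : Lp ℝ 2 P :=
  Lp.const 2 P (1 : ℝ)

variable [IsProbabilityMeasure P]

lemma aux_norm_one : ‖oneL2 P‖ = 1 := by
  rw [oneL2, Lp.norm_const' 2 P (1:ℝ) (by norm_num) (by norm_num)]
  simp

lemma aux_inner_one (x : Lp ℝ 2 P) :
    (inner ℝ (oneL2 P) x : ℝ) = meanL2 P x := by
  rw [L2.inner_def, meanL2]
  refine integral_congr_ae ?_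
  filter_upwards [Lp.coeFn_const 2 P (1 : ℝ)] with ω hω
  simp only [RCLike.inner_apply, conj_trivial, oneL2]
  rw [hω]
  simp

lemma aux_abs_le (x : Lp ℝ 2 P) : |meanL2 P x| ≤ ‖x‖ := by
  rw [← aux_inner_one x]
  calc |(inner ℝ (oneL2 P) x : ℝ)| ≤ ‖oneL2 P‖ * ‖x‖ := abs_real_inner_le_norm _ _
    _ = ‖x‖ := by rw [aux_norm_one, one_mul]

omit [IsProbabilityMeasure P] in
/-- Integrability of `‖h t‖²` from (Q2). -/
lemma aux_int_normsq (h : T → Lp ℝ 2 P)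
    (hQ2 : SatisfiesQ2 ν h) :
    Integrable (fun t => ‖h t‖ ^ 2) ν := by
  obtain ⟨hm, hi⟩ := hQ2
  have hmeas : AEMeasurable (fun t => ‖h t‖ ^ 2) ν := (hm.aemeasurable).pow_const 2
  refine ⟨hmeas.aestronglyMeasurable, ?_⟩
  rw [hasFiniteIntegral_iff_norm]
  calc ∫⁻ t, ENNReal.ofReal ‖‖h t‖ ^ 2‖ ∂ν
      = ∫⁻ t, ENNReal.ofReal (‖h t‖ ^ 2) ∂ν := by
        refine lintegral_congr fun t => ?_
        rw [Real.norm_of_nonneg (by positivity)]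
    _ < ⊤ := hi

omit [IsProbabilityMeasure P] mΩ' in
lemma aux_integrable_mul {a b : T → ℝ}
    (ha : AEMeasurable a ν) (hb : AEMeasurable b ν)
    (ha2 : Integrable (fun t => a t ^ 2) ν) (hb2 : Integrable (fun t => b t ^ 2) ν) :
    Integrable (fun t => a t * b t) ν := by
  refine Integrable.mono' (((ha2.add hb2).div_const 2)) (ha.mul hb).aestronglyMeasurable ?_
  refine Filter.Eventually.of_forall fun t => ?_
  have := two_mul_le_add_sq (|a t|) (|b t|)
  rw [Real.norm_eq_abs, abs_mul]
  simp only [sq_abs] at this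
  simp only [Pi.add_apply]
  nlinarith [abs_nonneg (a t), abs_nonneg (b t)]

/-- The mean identity satisfied by any equilibrium. -/
lemma aux_mean_identity
    (ν : Measure T)
    (θ : T → Lp ℝ 2 P) (R : T → T → ℝ) (𝔛 : T → MeasurableSpace Ω)
    (f : T → Lp ℝ 2 P) (h𝔛 : ∀ t, 𝔛 t ≤ mΩ')
    (heq : IsEquilibrium P ν θ R 𝔛 f) (t : T) :
    meanL2 P (f t) = (∫ t', R t t' * meanL2 P (f t') ∂ν) + meanL2 P (θ t) := by
  obtain ⟨F, hF, hfe⟩ := heq.2.2.2 t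
  have e1 : meanL2 P (f t) =
      ∫ ω, ((P[(F : Ω → ℝ)|𝔛 t]) ω + (P[(θ t : Ω → ℝ)|𝔛 t]) ω) ∂P :=
    integral_congr_ae hfe
  rw [e1, integral_add integrable_condExp integrable_condExp,
    integral_condExp (h𝔛 t), integral_condExp (h𝔛 t)]
  have e2 : meanL2 P F = ∫ t', R t t' * meanL2 P (f t') ∂ν := by
    rw [← aux_inner_one F, hF (oneL2 P)]
    exact integral_congr_ae (Filter.Eventually.of_forall fun t' => by
      simp only [aux_inner_one])
  show meanL2 P F + meanL2 P (θ t) = _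
  rw [e2]

end AuxHelpers

/-- Suppose `1` is not an eigenvalue of the integral operator `𝐑` of the
payoff structure `R` on `L²(ν)` (which holds in particular under (R2)).  If `f` and `g` are
equilibria of two incomplete information games sharing the same state process `θ` and payoff
structure `R` (but possibly different signal structures), then `E[f t] = E[g t]` for every
`t ∈ T`. -/
theorem equilibrium_mean_unique
    {Ω : Type*} [mΩ : MeasurableSpace Ω] (P : Measure Ω) [IsProbabilityMeasure P]
    {T : Type*} [MeasurableSpace T] (ν : Measure T) [IsProbabilityMeasure ν]
    (θ : T → Lp ℝ 2 P) (R : T → T → ℝ)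
    (𝔛₁ 𝔛₂ : T → MeasurableSpace Ω)
    (f g : T → Lp ℝ 2 P)
    (hθ1 : SatisfiesQ1 ν θ) (hθ2 : SatisfiesQ2 ν θ)
    (hRmeas : Measurable (Function.uncurry R))
    (hRsq1 : ∀ s, Integrable (fun t => (R s t) ^ 2) ν)
    (hRsq2 : Integrable (fun p : T × T => (R p.1 p.2) ^ 2) (ν.prod ν))
    (h𝔛₁ : ∀ t, 𝔛₁ t ≤ mΩ) (h𝔛₂ : ∀ t, 𝔛₂ t ≤ mΩ)
    (hno1 : ¬ ∃ φ : Lp ℝ 2 ν, ‖φ‖ ≠ 0 ∧ ∀ᵐ s ∂ν, ∫ t, R s t * φ t ∂ν = φ s)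
    (heqf : IsEquilibrium P ν θ R 𝔛₁ f)
    (heqg : IsEquilibrium P ν θ R 𝔛₂ g) :
    ∀ t : T, meanL2 P (f t) = meanL2 P (g t) := by
  intro t₀
  set mf : T → ℝ := fun t => meanL2 P (f t) with hmf
  set mg : T → ℝ := fun t => meanL2 P (g t) with hmg
  set d : T → ℝ := fun t => mf t - mg t with hd
  have hfid : ∀ t, mf t = (∫ t', R t t' * mf t' ∂ν) + meanL2 P (θ t) :=
    fun t => aux_mean_identity ν θ R 𝔛₁ f h𝔛₁ heqf t
  have hgid : ∀ t, mg t = (∫ t', R t t' * mg t' ∂ν) + meanL2 P (θ t) :=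
    fun t => aux_mean_identity ν θ R 𝔛₂ g h𝔛₂ heqg t
  have hmfm : AEMeasurable mf ν :=
    (aux_aemeasurable_inner f heqf.2.1 (oneL2 P)).congr
      (Filter.Eventually.of_forall fun t => aux_inner_one (f t))
  have hmgm : AEMeasurable mg ν :=
    (aux_aemeasurable_inner g heqg.2.1 (oneL2 P)).congr
      (Filter.Eventually.of_forall fun t => aux_inner_one (g t))
  have hdm : AEMeasurable d ν := hmfm.sub hmgm
  have hf2 : Integrable (fun t => ‖f t‖ ^ 2) ν := aux_int_normsq f heqf.2.2.1
  have hg2 : Integrable (fun t => ‖g t‖ ^ 2) ν := aux_int_normsq g heqg.2.2.1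
  have hmf2 : Integrable (fun t => mf t ^ 2) ν := by
    refine Integrable.mono' hf2 (hmfm.pow_const 2).aestronglyMeasurable ?_
    refine Filter.Eventually.of_forall fun t => ?_
    rw [Real.norm_eq_abs, abs_of_nonneg (sq_nonneg _)]
    have h1 := aux_abs_le (f t)
    have h2 := abs_nonneg (meanL2 P (f t))
    have : mf t = meanL2 P (f t) := rfl
    nlinarith [sq_abs (mf t)]
  have hmg2 : Integrable (fun t => mg t ^ 2) ν := by
    refine Integrable.mono' hg2 (hmgm.pow_const 2).aestronglyMeasurable ?_
    refine Filter.Eventually.of_forall fun t => ?_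
    rw [Real.norm_eq_abs, abs_of_nonneg (sq_nonneg _)]
    have h1 := aux_abs_le (g t)
    have h2 := abs_nonneg (meanL2 P (g t))
    have : mg t = meanL2 P (g t) := rfl
    nlinarith [sq_abs (mg t)]
  have hd2 : Integrable (fun t => d t ^ 2) ν := by
    refine Integrable.mono' ((hmf2.const_mul 2).add (hmg2.const_mul 2))
      (hdm.pow_const 2).aestronglyMeasurable ?_
    refine Filter.Eventually.of_forall fun t => ?_
    rw [Real.norm_eq_abs, abs_of_nonneg (sq_nonneg _)]
    simp only [Pi.add_apply, hd]
    nlinarith [sq_nonneg (mf t + mg t)]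
  have hkey : ∀ t, d t = ∫ t', R t t' * d t' ∂ν := by
    intro t
    have hRa : AEMeasurable (fun t' => R t t') ν :=
      (hRmeas.comp measurable_prodMk_left).aemeasurable
    have h1 : Integrable (fun t' => R t t' * mf t') ν :=
      aux_integrable_mul hRa hmfm (hRsq1 t) hmf2
    have h2 : Integrable (fun t' => R t t' * mg t') ν :=
      aux_integrable_mul hRa hmgm (hRsq1 t) hmg2
    have e : d t = (∫ t', R t t' * mf t' ∂ν) - (∫ t', R t t' * mg t' ∂ν) := by
      simp only [hd]
      rw [hfid t, hgid t]
      ring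
    rw [e, ← integral_sub h1 h2]
    exact integral_congr_ae (Filter.Eventually.of_forall fun t' => by
      simp only [hd]; ring)
  have hdmem : MemLp d 2 ν :=
    (memLp_two_iff_integrable_sq hdm.aestronglyMeasurable).mpr hd2
  set φ : Lp ℝ 2 ν := hdmem.toLp d with hφdef
  have hφd : (φ : T → ℝ) =ᵐ[ν] d := hdmem.coeFn_toLp
  by_cases hz : ‖φ‖ = 0
  · have hφ0 : φ = 0 := norm_eq_zero.mp hz
    have hd0 : d =ᵐ[ν] 0 := by
      refine hφd.symm.trans ?_
      rw [hφ0]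
      exact Lp.coeFn_zero _ _ _
    have hzero : d t₀ = 0 := by
      rw [hkey t₀]
      refine integral_eq_zero_of_ae ?_
      filter_upwards [hd0] with t' h
      simp only [Pi.zero_apply] at h
      simp [h]
    have : mf t₀ - mg t₀ = 0 := hzero
    linarith
  · exfalso
    apply hno1
    refine ⟨φ, hz, ?_⟩
    filter_upwards [hφd] with s hs
    have e : ∫ t, R s t * (φ : T → ℝ) t ∂ν = ∫ t, R s t * d t ∂ν :=
      integral_congr_ae (hφd.mono fun t ht => by simp only; rw [ht])
    rw [e, ← hkey s, hs]
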